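/- arXiv:1406.5240 — 2 statements merged into one kernel-verified Lean document; each statement's English description precedes it below -/
import Mathlib

section
/- Let Λ = Σ_{k=1}^{n−1} ((1−α^k)/(1−α)) e_{k+1,k} with α = e^{2πi/n} a primitive n-th root of unity. Then for each 1 ≤ j ≤ n−1, the sum of the entries of Λ^j on its −j-th diagonal, tr_{-j}(Λ^j), is nonzero. -/
/-!
By induction, `Λ ^ j` has the entries `∏_{t < j} (1 - α ^ (p + t + 1)) / (1 - α)` at `(p + j, p)`.
Letting `p` run over all of `0, …, n - 1` adds only zeros, since for `p + j ≥ n` the product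
contains the factor `1 - α ^ n = 0`. So `(1 - α) ^ j · tr_{-j}(Λ ^ j) = ∑_{p < n} Q(α ^ p)` for
`Q(x) = ∏_{t < j} (1 - α ^ (t + 1) x)`, a polynomial of degree `j < n` with `Q(0) = 1`.
Averaging over the `n`-th roots of unity kills every nonconstant monomial, so the sum is
`n / (1 - α) ^ j ≠ 0`.
-/

open Matrix Finset Polynomial

def shiftMatrix {R : Type*} [Zero R] (n : ℕ) (w : ℕ → R) : Matrix (Fin n) (Fin n) R :=
  of fun i j => if (i : ℕ) = j + 1 then w i else 0

theorem shiftMatrix_pow_apply {R : Type*} [CommSemiring R] {n : ℕ} (w : ℕ → R) (m : ℕ)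
    (a b : Fin n) :
    (shiftMatrix n w ^ m) a b = if (a : ℕ) = b + m then ∏ t ∈ range m, w (b + t + 1) else 0 := by
  induction m generalizing b with
  | zero => simp [one_apply, Fin.ext_iff]
  | succ m ih =>
    rw [pow_succ, mul_apply]
    simp_rw [ih]
    simp only [shiftMatrix, of_apply]
    rw [Fin.sum_univ_eq_sum_range (fun x => (if (a : ℕ) = x + m then
      ∏ t ∈ range m, w (x + t + 1) else 0) * if x = b + 1 then w x else 0)]
    simp only [mul_ite, mul_zero, ite_mul, zero_mul, sum_ite_eq', mem_range,
      add_right_comm _ 1 m, add_assoc _ m 1]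
    split_ifs with hb hab
    · rw [prod_range_succ', add_zero]
      congr 2 with t
      rw [add_right_comm _ 1 t, add_assoc _ t 1]
    · rfl
    · have := a.isLt; omega
    · rfl

namespace IsPrimitiveRoot

variable {R : Type*} [CommRing R] [IsDomain R] {ζ : R} {n : ℕ}

theorem geom_sum_pow_eq_zero (hζ : IsPrimitiveRoot ζ n) {i : ℕ} (hi₀ : 0 < i) (hin : i < n) :
    ∑ p ∈ range n, (ζ ^ i) ^ p = 0 := by
  have hne : ζ ^ i - 1 ≠ 0 := sub_ne_zero.mpr (hζ.pow_ne_one_of_pos_of_lt hi₀.ne' hin)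
  apply (mul_left_inj' hne).mp
  rw [geom_sum_mul, ← pow_mul, mul_comm, pow_mul, hζ.pow_eq_one, one_pow, sub_self, zero_mul]

theorem sum_eval_pow (hζ : IsPrimitiveRoot ζ n) {P : R[X]} (hP : P.natDegree < n) :
    ∑ p ∈ range n, P.eval (ζ ^ p) = n * P.coeff 0 := by
  simp_rw [eval_eq_sum_range' hP]
  rw [sum_comm]
  simp_rw [← pow_mul, mul_comm _ (_ : ℕ), pow_mul, ← mul_sum]
  rw [sum_eq_single_of_mem 0 (mem_range.mpr (hP.trans_le' (Nat.zero_le _)))]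
  · simp [mul_comm]
  · intro i hi hi0
    rw [hζ.geom_sum_pow_eq_zero (Nat.pos_of_ne_zero hi0) (mem_range.mp hi), mul_zero]

theorem sum_prod_one_sub_mul_pow {ι : Type*} (hζ : IsPrimitiveRoot ζ n) {s : Finset ι}
    (hs : #s < n) (c : ι → R) :
    ∑ p ∈ range n, ∏ t ∈ s, (1 - c t * ζ ^ p) = n := by
  set P : R[X] := ∏ t ∈ s, (1 - C (c t) * X)
  have hdeg : P.natDegree < n := by
    have hfactor : ∀ t ∈ s, (1 - C (c t) * X).natDegree ≤ 1 := fun t _ =>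
      (natDegree_sub_le _ _).trans <| max_le (by simp) <|
        (natDegree_C_mul_le (c t) X).trans natDegree_X_le
    calc P.natDegree ≤ ∑ t ∈ s, (1 - C (c t) * X).natDegree := natDegree_prod_le s _
      _ ≤ #s := by simpa using sum_le_sum hfactor
      _ < n := hs
  simpa [P, eval_prod, coeff_zero_eq_eval_zero] using hζ.sum_eval_pow hdeg

end IsPrimitiveRoot

theorem stmt15_general (n : ℕ)
    (α : ℂ) (hα : α = Complex.exp (2 * Real.pi * Complex.I / n))
    (Λ : Matrix (Fin n) (Fin n) ℂ)
    (hΛ : Λ = Matrix.of fun i j : Fin n =>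
        if (i : ℕ) = (j : ℕ) + 1 then (1 - α ^ (i : ℕ)) / (1 - α) else 0) :
    ∀ j : ℕ, 1 ≤ j → j ≤ n - 1 →
      (∑ p : Fin n, if h : (p : ℕ) + j < n then (Λ ^ j) ⟨(p : ℕ) + j, h⟩ p else 0) ≠ 0 := by
  intro j hj₁ hjn
  have hζ : IsPrimitiveRoot α n := hα ▸ Complex.isPrimitiveRoot_exp n (by omega)
  have hα₁ : 1 - α ≠ 0 := sub_ne_zero.mpr (hζ.ne_one (by omega)).symm
  have hΛw : Λ = shiftMatrix n fun k => (1 - α ^ k) / (1 - α) := hΛ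
  have hdiag (p : ℕ) : ∏ t ∈ range j, (1 - α ^ (p + t + 1)) / (1 - α) =
      (∏ t ∈ range j, (1 - α ^ (t + 1) * α ^ p)) / (1 - α) ^ j := by
    rw [prod_div_distrib, prod_const, card_range]
    exact congrArg (· / _) (prod_congr rfl fun t _ => by ring)
  calc (∑ p : Fin n, if h : (p : ℕ) + j < n then (Λ ^ j) ⟨(p : ℕ) + j, h⟩ p else 0)
      = ∑ p : Fin n, ∏ t ∈ range j, (1 - α ^ ((p : ℕ) + t + 1)) / (1 - α) := by
        refine sum_congr rfl fun p _ => ?_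
        split_ifs with h
        · rw [hΛw, shiftMatrix_pow_apply, if_pos rfl]
        · refine (prod_eq_zero (i := n - p - 1) (mem_range.mpr (by omega)) ?_).symm
          rw [show (p : ℕ) + (n - p - 1) + 1 = n by omega, hζ.pow_eq_one, sub_self, zero_div]
    _ = n / (1 - α) ^ j := by
        rw [Fin.sum_univ_eq_sum_range (fun p => ∏ t ∈ range j, (1 - α ^ (p + t + 1)) / (1 - α)),
          sum_congr rfl fun p _ => hdiag p, ← sum_div,
          hζ.sum_prod_one_sub_mul_pow (by rw [card_range]; omega)]
    _ ≠ 0 := div_ne_zero (by exact_mod_cast (by omega : n ≠ 0)) (pow_ne_zero _ hα₁)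

theorem stmt15 (n : ℕ) (hn : 2 ≤ n)
    (α : ℂ) (hα : α = Complex.exp (2 * Real.pi * Complex.I / n))
    (Λ : Matrix (Fin n) (Fin n) ℂ)
    (hΛ : Λ = Matrix.of fun i j : Fin n =>
        if (i : ℕ) = (j : ℕ) + 1 then (1 - α ^ (i : ℕ)) / (1 - α) else 0) :
    ∀ j : ℕ, 1 ≤ j → j ≤ n - 1 →
      (∑ p : Fin n, if h : (p : ℕ) + j < n then (Λ ^ j) ⟨(p : ℕ) + j, h⟩ p else 0) ≠ 0 :=
  stmt15_general n α hα Λ hΛ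
end

section
/- Suppose η ∈ C^∞(ℝ, B_-) (lower triangular matrix valued) satisfies η(∂_x − (J+ξ))η^{-1} = ∂_x − (J+ξ̃) where ξ = Σ ξ_i e_{n,n−i} and ξ̃ = Σ ξ̃_i e_{n,n−i} both lie in C^∞(ℝ, S_1). Then η = c·I_n for some constant c ∈ ℂ. -/
/-!
Away from the last row, `η ξ` and `ξ̃ η` vanish (`η` is lower triangular and `ξ`, `ξ̃` live in the
last row), so the gauge equation reads `[b, η] = η_x` there. On the superdiagonal this says that
all diagonal entries of `η` are equal, while the trace of the gauge equation gives `tr η_x = 0`;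
hence the common diagonal entry is constant. Then, one subdiagonal at a time, `[b, η] = η_x`
expresses `η_{k+1,l}` as `η_{k,l-1}` plus a derivative of an entry already known to be constant,
and `η_{k+1,0}` as such a derivative alone, so every subdiagonal vanishes.
-/

open Matrix

namespace Matrix

variable {n : ℕ} {R : Type*}

def upperShift (n : ℕ) (R : Type*) [Zero R] [One R] : Matrix (Fin n) (Fin n) R :=
  of fun i j => if (i : ℕ) + 1 = (j : ℕ) then 1 else 0

/-- Membership in the paper's `S_1 = span {e_{n,n-i} : 1 ≤ i ≤ n-1}`. -/
def IsOffDiagLastRow [Zero R] (X : Matrix (Fin n) (Fin n) R) : Prop :=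
  ∀ k l, X k l ≠ 0 → (k : ℕ) = n - 1 ∧ (l : ℕ) < n - 1

section Semiring

variable [NonAssocSemiring R]

theorem upperShift_mul_apply {k : ℕ} (hk : k + 1 < n) (A : Matrix (Fin n) (Fin n) R)
    (l : Fin n) : (upperShift n R * A) ⟨k, by omega⟩ l = A ⟨k + 1, hk⟩ l := by
  rw [mul_apply, Finset.sum_eq_single ⟨k + 1, hk⟩]
  · simp [upperShift]
  · intro j _ hj
    simp [upperShift, Fin.ext_iff] at hj ⊢
    omega
  · simp

theorem mul_upperShift_apply_succ (A : Matrix (Fin n) (Fin n) R) (k : Fin n) {l : ℕ}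
    (hl : l + 1 < n) : (A * upperShift n R) k ⟨l + 1, hl⟩ = A k ⟨l, by omega⟩ := by
  rw [mul_apply, Finset.sum_eq_single ⟨l, by omega⟩]
  · simp [upperShift]
  · intro j _ hj
    simp [upperShift, Fin.ext_iff] at hj ⊢
    omega
  · simp

theorem mul_upperShift_apply_zero (A : Matrix (Fin n) (Fin n) R) (k : Fin n) (hn : 0 < n) :
    (A * upperShift n R) k ⟨0, hn⟩ = 0 := by
  rw [mul_apply]
  exact Finset.sum_eq_zero fun j _ => by simp [upperShift]

end Semiring

section Ring

variable [Ring R]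

theorem upperShift_commutator_apply_succ (A : Matrix (Fin n) (Fin n) R) {k l : ℕ}
    (hk : k + 1 < n) (hl : l + 1 < n) :
    (upperShift n R * A - A * upperShift n R) ⟨k, by omega⟩ ⟨l + 1, hl⟩ =
      A ⟨k + 1, hk⟩ ⟨l + 1, hl⟩ - A ⟨k, by omega⟩ ⟨l, by omega⟩ := by
  rw [sub_apply, upperShift_mul_apply hk, mul_upperShift_apply_succ]

theorem upperShift_commutator_apply_zero (A : Matrix (Fin n) (Fin n) R) {k : ℕ}
    (hk : k + 1 < n) :
    (upperShift n R * A - A * upperShift n R) ⟨k, by omega⟩ ⟨0, by omega⟩ =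
      A ⟨k + 1, hk⟩ ⟨0, by omega⟩ := by
  rw [sub_apply, upperShift_mul_apply hk, mul_upperShift_apply_zero, sub_zero]

end Ring

theorem trace_mul_eq_zero_of_isLowerTriangular {m : Type*} [Fintype m] [LinearOrder m]
    [NonUnitalNonAssocSemiring R] {A B : Matrix m m R} (hA : A.IsLowerTriangular)
    (hB : ∀ i j, B i j ≠ 0 → j < i) : trace (A * B) = 0 := by
  simp only [trace, diag_apply, mul_apply]
  refine Finset.sum_eq_zero fun i _ => Finset.sum_eq_zero fun j _ => ?_
  by_cases hij : i < j
  · rw [hA hij, zero_mul]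
  · rw [not_ne_iff.mp fun h => hij (hB j i h), mul_zero]


theorem IsOffDiagLastRow.lt_of_ne_zero [Zero R] {X : Matrix (Fin n) (Fin n) R}
    (hX : X.IsOffDiagLastRow) {k l : Fin n} (h : X k l ≠ 0) : l < k := by
  have := hX k l h
  rw [Fin.lt_def]
  omega

section Gauge

variable {A X X' D : Matrix (Fin n) (Fin n) R}

theorem upperShift_commutator_apply_of_gauge [Ring R] (hA : A.IsLowerTriangular)
    (hX : X.IsOffDiagLastRow) (hX' : X'.IsOffDiagLastRow)
    (h : upperShift n R * A - A * upperShift n R = A * X + D - X' * A)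
    {k : Fin n} (hk : (k : ℕ) + 1 < n) (l : Fin n) :
    (upperShift n R * A - A * upperShift n R) k l = D k l := by
  have hAX : (A * X) k l = 0 := by
    rw [mul_apply]
    refine Finset.sum_eq_zero fun j _ => ?_
    by_cases hj : X j l = 0
    · rw [hj, mul_zero]
    · rw [hA (show k < j by have := (hX j l hj).1; rw [Fin.lt_def]; omega), zero_mul]
  have hX'A : (X' * A) k l = 0 := by
    rw [mul_apply]
    refine Finset.sum_eq_zero fun j _ => ?_
    by_cases hj : X' k j = 0
    · rw [hj, zero_mul]
    · exact absurd (hX' k j hj).1 (by omega)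
  rw [h, sub_apply, add_apply, hAX, hX'A, zero_add, sub_zero]

theorem trace_eq_zero_of_gauge [CommRing R] (hA : A.IsLowerTriangular)
    (hX : X.IsOffDiagLastRow) (hX' : X'.IsOffDiagLastRow)
    (h : upperShift n R * A - A * upperShift n R = A * X + D - X' * A) : trace D = 0 := by
  have htr := congrArg trace h
  rwa [trace_sub, trace_mul_comm (upperShift n R), sub_self, trace_sub, trace_add,
    trace_mul_comm X', trace_mul_eq_zero_of_isLowerTriangular hA fun _ _ => hX.lt_of_ne_zero,
    trace_mul_eq_zero_of_isLowerTriangular hA fun _ _ => hX'.lt_of_ne_zero, zero_add, sub_zero,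
    eq_comm] at htr

variable [Ring R]

theorem diag_eq_of_upperShift_commutator
    (hrow : ∀ k l : Fin n, (k : ℕ) + 1 < n →
      (upperShift n R * A - A * upperShift n R) k l = D k l)
    (hD : ∀ k l : Fin n, (l : ℕ) = k + 1 → D k l = 0) (k : Fin n) :
    A k k = A ⟨0, k.pos⟩ ⟨0, k.pos⟩ := by
  obtain ⟨k, hk⟩ := k
  induction k with
  | zero => rfl
  | succ k ih =>
    have hstep := hrow ⟨k, by omega⟩ ⟨k + 1, hk⟩ hk
    rw [upperShift_commutator_apply_succ A hk hk, hD _ _ rfl, sub_eq_zero] at hstep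
    rw [hstep, ih]

theorem apply_eq_zero_of_upperShift_commutator {d : ℕ}
    (hrow : ∀ k l : Fin n, (k : ℕ) + 1 < n →
      (upperShift n R * A - A * upperShift n R) k l = D k l)
    (hD : ∀ k l : Fin n, (k : ℕ) = l + d → D k l = 0)
    (k l : Fin n) (hkl : (k : ℕ) = l + (d + 1)) : A k l = 0 := by
  obtain ⟨k, hk⟩ := k
  obtain ⟨l, hl⟩ := l
  dsimp only at hkl
  subst hkl
  induction l with
  | zero =>
    have hstep := hrow ⟨d, by omega⟩ ⟨0, hl⟩ (show d + 1 < n by omega)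
    rw [upperShift_commutator_apply_zero A (k := d) (by omega),
      hD ⟨d, _⟩ ⟨0, _⟩ (zero_add d).symm] at hstep
    simpa using hstep
  | succ l ih =>
    have hstep :=
      hrow ⟨l + (d + 1), by omega⟩ ⟨l + 1, hl⟩ (show l + (d + 1) + 1 < n by omega)
    rw [upperShift_commutator_apply_succ A (k := l + (d + 1)) (by omega) hl,
      hD ⟨l + (d + 1), _⟩ ⟨l + 1, hl⟩ (by simp only; omega),
      ih (by omega) (by omega), sub_zero] at hstep
    simpa [add_right_comm] using hstep

end Gauge

end Matrix

section Calculus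

variable {𝕜 : Type*} [RCLike 𝕜] {n : ℕ} {η η' : ℝ → Matrix (Fin n) (Fin n) 𝕜}

theorem apply_eq_zero_of_upperShift_commutator_eq_deriv
    (hderiv : ∀ (k l : Fin n) (x : ℝ), HasDerivAt (fun t => η t k l) (η' x k l) x)
    (hrow : ∀ x, ∀ k l : Fin n, (k : ℕ) + 1 < n →
      (upperShift n 𝕜 * η x - η x * upperShift n 𝕜) k l = η' x k l)
    (hdiag : ∀ x k, η' x k k = 0) (d : ℕ) (x : ℝ) :
    ∀ k l : Fin n, (k : ℕ) = l + (d + 1) → η x k l = 0 := by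
  induction d generalizing x with
  | zero =>
    refine apply_eq_zero_of_upperShift_commutator (hrow x) fun k l hkl => ?_
    obtain rfl : k = l := Fin.ext hkl
    exact hdiag x k
  | succ d ih =>
    refine apply_eq_zero_of_upperShift_commutator (hrow x) fun k l hkl => ?_
    exact (hderiv k l x).unique (by simpa [ih _ k l hkl] using hasDerivAt_const x (0 : 𝕜))

theorem exists_eq_smul_one_of_upperShift_commutator_eq_deriv
    (hlow : ∀ x, (η x).IsLowerTriangular)
    (hderiv : ∀ (k l : Fin n) (x : ℝ), HasDerivAt (fun t => η t k l) (η' x k l) x)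
    (hrow : ∀ x, ∀ k l : Fin n, (k : ℕ) + 1 < n →
      (upperShift n 𝕜 * η x - η x * upperShift n 𝕜) k l = η' x k l)
    (htr : ∀ x, trace (η' x) = 0) :
    ∃ c : 𝕜, ∀ x, η x = c • (1 : Matrix (Fin n) (Fin n) 𝕜) := by
  rcases n.eq_zero_or_pos with rfl | hn
  · exact ⟨0, fun x => Subsingleton.elim _ _⟩
  set o : Fin n := ⟨0, hn⟩
  have hdiag x k : η x k k = η x o o := by
    refine diag_eq_of_upperShift_commutator (hrow x) (fun k l hkl => ?_) k
    have hzero t : η t k l = 0 := hlow t (show k < l by rw [Fin.lt_def]; omega)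
    exact (hderiv k l x).unique (by simpa [hzero] using hasDerivAt_const x (0 : 𝕜))
  have hdiag_deriv x k : η' x k k = η' x o o :=
    (hderiv k k x).unique (by simpa only [hdiag] using hderiv o o x)
  have hdiag_deriv_zero x : η' x o o = 0 := by
    have h := htr x
    simp only [trace, diag_apply, hdiag_deriv, Finset.sum_const, Finset.card_univ,
      Fintype.card_fin, nsmul_eq_mul, mul_eq_zero, Nat.cast_eq_zero] at h
    exact h.resolve_left hn.ne'
  have hoff := apply_eq_zero_of_upperShift_commutator_eq_deriv hderiv hrow
    fun x k => (hdiag_deriv x k).trans (hdiag_deriv_zero x)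
  have hconst x : η x o o = η 0 o o :=
    is_const_of_deriv_eq_zero (fun t => (hderiv o o t).differentiableAt)
      (fun t => by rw [(hderiv o o t).deriv, hdiag_deriv_zero]) x 0
  refine ⟨η 0 o o, fun x => ?_⟩
  ext k l
  rw [Matrix.smul_apply, one_apply, smul_eq_mul]
  rcases lt_trichotomy k l with hkl | rfl | hkl
  · rw [hlow x hkl, if_neg hkl.ne, mul_zero]
  · rw [if_pos rfl, mul_one, hdiag, hconst]
  · rw [hoff (k - l - 1) x k l (by rw [Fin.lt_def] at hkl; omega), if_neg hkl.ne', mul_zero]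

end Calculus

theorem stmt18_general (n : ℕ)
    (b : Matrix (Fin n) (Fin n) ℂ)
    (hb : b = Matrix.of fun i j : Fin n => if (i : ℕ) + 1 = (j : ℕ) then 1 else 0)
    (η η' ξ ξ' : ℝ → Matrix (Fin n) (Fin n) ℂ)
    (hηlow : ∀ x, ∀ k l : Fin n, (k : ℕ) < (l : ℕ) → η x k l = 0)
    (hηderiv : ∀ (k l : Fin n) (x : ℝ), HasDerivAt (fun t => η t k l) (η' x k l) x)
    (hξ : ∀ x, ∀ k l : Fin n, ξ x k l ≠ 0 → (k : ℕ) = n - 1 ∧ (l : ℕ) < n - 1)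
    (hξ' : ∀ x, ∀ k l : Fin n, ξ' x k l ≠ 0 → (k : ℕ) = n - 1 ∧ (l : ℕ) < n - 1)
    (heq : ∀ x, b * η x - η x * b = η x * ξ x + η' x - ξ' x * η x) :
    ∃ c : ℂ, ∀ x, η x = c • (1 : Matrix (Fin n) (Fin n) ℂ) := by
  replace hb : b = upperShift n ℂ := hb
  subst hb
  exact exists_eq_smul_one_of_upperShift_commutator_eq_deriv hηlow hηderiv
    (fun x _ l hk => upperShift_commutator_apply_of_gauge (hηlow x) (hξ x) (hξ' x) (heq x) hk l)
    (fun x => trace_eq_zero_of_gauge (hηlow x) (hξ x) (hξ' x) (heq x))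

theorem stmt18 (n : ℕ) (hn : 2 ≤ n)
    (b : Matrix (Fin n) (Fin n) ℂ)
    (hb : b = Matrix.of fun i j : Fin n => if (i : ℕ) + 1 = (j : ℕ) then 1 else 0)
    (η η' ξ ξ' : ℝ → Matrix (Fin n) (Fin n) ℂ)
    (hηlow : ∀ x, ∀ k l : Fin n, (k : ℕ) < (l : ℕ) → η x k l = 0)
    (hηinv : ∀ x, IsUnit (η x))
    (hηderiv : ∀ (k l : Fin n) (x : ℝ), HasDerivAt (fun t => η t k l) (η' x k l) x)
    (hξ : ∀ x, ∀ k l : Fin n, ξ x k l ≠ 0 → (k : ℕ) = n - 1 ∧ (l : ℕ) < n - 1)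
    (hξ' : ∀ x, ∀ k l : Fin n, ξ' x k l ≠ 0 → (k : ℕ) = n - 1 ∧ (l : ℕ) < n - 1)
    (heq : ∀ x, b * η x - η x * b = η x * ξ x + η' x - ξ' x * η x) :
    ∃ c : ℂ, ∀ x, η x = c • (1 : Matrix (Fin n) (Fin n) ℂ) :=
  stmt18_general n b hb η η' ξ ξ' hηlow hηderiv hξ hξ' heq
end
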